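/- arXiv:2208.04931 — 2 statements merged into one kernel-verified Lean document; each statement's English description precedes it below -/
import Mathlib

section
/- Let (Z, ≤) be a linear order, let X ⊆ Z, and let P_1, …, P_m be pairwise disjoint subsets of Z (distinct blocks of a partition of Z). For j ≥ 1 write ρ(j) = ((j − 1) mod m) + 1. Then the following are equivalent: (1) for every k ∈ ℕ there exist elements x_1 ≤ x_2 ≤ … ≤ x_{km} of X with x_j ∈ P_{ρ(j)} for every j ≤ km (i.e., the finite string (P_1⋯P_m)^k is generated by X for every k); (2) there exists a monotone sequence (x_j)_{j≥1} of elements of X — nondecreasing or nonincreasing — with x_j ∈ P_{ρ(j)} for every j ≥ 1 (i.e., the infinite string (P_1⋯P_m)^ω is generated by X). -/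
/-!
Call a set rich (`GeneratesAllPowers`) if it generates `(P₀ ⋯ P_{m-1})^k` for every `k`. A rich
set stays rich above a point `p` or strictly below it: if the part above `p` fails at `k₀`
periods, then in a chain of `k + k₀` periods some letter of the last `k₀` periods lies below `p`,
and with it the first `k` periods. So, starting from a rich set, either one can forever take one
period of a chain and pass to the rich part above its last letter, which builds a nondecreasing
sequence, or some rich set has a chain `c` of `m` periods with a rich part below `c (m - 1)`.
Taking the `i`-th letter from period `m - 1 - i` then reads one period of the pattern in
nonincreasing order, ending at `c (m - 1)`, and one recurses below it to build a nonincreasing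
sequence.
-/

open Set

section

variable {α : Type*} {m : ℕ}

theorem rel_div_mod_succ (hm : 0 < m) {β : Type*} (R : β → β → Prop) (b : ℕ → ℕ → β)
    (hwithin : ∀ n i, i + 1 < m → R (b n i) (b n (i + 1)))
    (hacross : ∀ n, R (b n (m - 1)) (b (n + 1) 0)) (j : ℕ) :
    R (b (j / m) (j % m)) (b ((j + 1) / m) ((j + 1) % m)) := by
  have hj := Nat.mod_add_div j m
  have hr := Nat.mod_lt j hm
  by_cases h : j % m + 1 < m
  · obtain ⟨hq, hr'⟩ := (Nat.div_mod_unique hm).2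
      (⟨by omega, h⟩ : j % m + 1 + m * (j / m) = j + 1 ∧ _)
    rw [hq, hr']
    exact hwithin _ _ h
  · obtain ⟨hq, hr'⟩ := (Nat.div_mod_unique hm).2
      (⟨by rw [Nat.mul_add]; omega, hm⟩ : 0 + m * (j / m + 1) = j + 1 ∧ _)
    rw [hq, hr', show j % m = m - 1 by omega]
    exact hacross _

variable (hm : 0 < m) (P : Fin m → Set α)

def IsPatternBlock (R : α → α → Prop) (C : Set α) (B : ℕ → α) : Prop :=
  (∀ i (hi : i < m), B i ∈ C ∩ P ⟨i, hi⟩) ∧ ∀ i, i + 1 < m → R (B i) (B (i + 1))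

def IsPatternSeq (R : α → α → Prop) (S : Set α) (x : ℕ → α) : Prop :=
  (∀ j, x j ∈ S) ∧ (∀ j, R (x j) (x (j + 1))) ∧ ∀ j, x j ∈ P ⟨j % m, Nat.mod_lt j hm⟩

variable {hm P} in
theorem IsPatternSeq.mono {R : α → α → Prop} {S T : Set α} {x : ℕ → α}
    (hx : IsPatternSeq hm P R S x) (hST : S ⊆ T) : IsPatternSeq hm P R T x :=
  ⟨fun j => hST (hx.1 j), hx.2⟩

theorem exists_isPatternSeq_of_forall_exists_block (R : α → α → Prop) (good : Set α → Prop)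
    (hstep : ∀ C, good C → ∃ B, IsPatternBlock P R C B ∧ good (C ∩ {z | R (B (m - 1)) z}))
    {C₀ : Set α} (h₀ : good C₀) : ∃ x, IsPatternSeq hm P R C₀ x := by
  choose B hB hgood using fun C : {C // good C} => hstep C.1 C.2
  let C : ℕ → {C // good C} := fun n => (fun C => ⟨_, hgood C⟩)^[n] ⟨C₀, h₀⟩
  have hC_succ (n : ℕ) : (C (n + 1)).1 = (C n).1 ∩ {z | R (B (C n) (m - 1)) z} :=
    congrArg Subtype.val (Function.iterate_succ_apply' _ _ _)
  have hC_sub (n : ℕ) : (C n).1 ⊆ C₀ := by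
    induction n with
    | zero => exact subset_rfl
    | succ n ih => rw [hC_succ]; exact inter_subset_left.trans ih
  refine ⟨fun j => B (C (j / m)) (j % m), fun j => hC_sub _ ((hB _).1 _ (Nat.mod_lt j hm)).1,
    rel_div_mod_succ hm R _ (fun n => (hB (C n)).2) (fun n => ?_),
    fun j => ((hB _).1 _ (Nat.mod_lt j hm)).2⟩
  have hfirst := ((hB (C (n + 1))).1 0 hm).1
  rw [hC_succ] at hfirst
  exact hfirst.2

end

section Preorder

variable {α : Type*} [Preorder α] {m : ℕ} (hm : 0 < m) (P : Fin m → Set α)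

/-- `c 0 ≤ ⋯ ≤ c (n - 1)` in `S` witness that `S` generates the first `n` letters of
`(P₀ ⋯ P_{m-1})^ω`. -/
def IsPatternChain (S : Set α) (n : ℕ) (c : ℕ → α) : Prop :=
  (∀ j < n, c j ∈ S) ∧ (∀ i j, i ≤ j → j < n → c i ≤ c j) ∧
    ∀ j < n, c j ∈ P ⟨j % m, Nat.mod_lt j hm⟩

def GeneratesAllPowers (S : Set α) : Prop :=
  ∀ k, ∃ c, IsPatternChain hm P S (k * m) c

namespace IsPatternChain

variable {hm P} {S T : Set α} {n : ℕ} {c : ℕ → α}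

theorem mono (hc : IsPatternChain hm P S n c) (hST : S ⊆ T) : IsPatternChain hm P T n c :=
  ⟨fun j hj => hST (hc.1 j hj), hc.2⟩

theorem inter (hc : IsPatternChain hm P S n c) (hT : ∀ j < n, c j ∈ T) :
    IsPatternChain hm P (S ∩ T) n c :=
  ⟨fun j hj => ⟨hc.1 j hj, hT j hj⟩, hc.2⟩

theorem of_le (hc : IsPatternChain hm P S n c) {n' : ℕ} (h : n' ≤ n) :
    IsPatternChain hm P S n' c :=
  ⟨fun j hj => hc.1 j (by omega), fun i j hij hj => hc.2.1 i j hij (by omega),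
    fun j hj => hc.2.2 j (by omega)⟩

theorem shift {k : ℕ} (hc : IsPatternChain hm P S (k * m + n) c) :
    IsPatternChain hm P S n (fun j => c (k * m + j)) :=
  ⟨fun j hj => hc.1 _ (by omega), fun i j hij hj => hc.2.1 _ _ (by omega) (by omega),
    fun j hj => by simpa using hc.2.2 (k * m + j) (by omega)⟩

theorem isPatternBlock (hc : IsPatternChain hm P S n c) (h : m ≤ n) :
    IsPatternBlock P (· ≤ ·) S c :=
  ⟨fun i hi => ⟨hc.1 i (by omega), by simpa [Nat.mod_eq_of_lt hi] using hc.2.2 i (by omega)⟩,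
    fun i hi => hc.2.1 i (i + 1) (by omega) (by omega)⟩

theorem exists_isPatternBlock_ge (hc : IsPatternChain hm P S (m * m) c) :
    ∃ B, IsPatternBlock P (· ≥ ·) S B ∧ B (m - 1) = c (m - 1) := by
  have hidx (i : ℕ) (hi : i < m) : (m - 1 - i) * m + i < m * m := by
    have := Nat.mul_le_mul_right m (show m - 1 - i + 1 ≤ m by omega)
    rw [Nat.succ_mul] at this
    omega
  refine ⟨fun i => c ((m - 1 - i) * m + i), ⟨fun i hi => ⟨hc.1 _ (hidx i hi), ?_⟩,
    fun i hi => hc.2.1 _ _ ?_ (hidx i (by omega))⟩, by simp⟩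
  · simpa [Nat.mod_eq_of_lt hi] using hc.2.2 _ (hidx i hi)
  · rw [show m - 1 - i = m - 1 - (i + 1) + 1 by omega, Nat.succ_mul]
    omega

end IsPatternChain

namespace IsPatternSeq

variable {hm P} {S : Set α} {x : ℕ → α}

theorem isPatternChain (hx : IsPatternSeq hm P (· ≤ ·) S x) (n : ℕ) :
    IsPatternChain hm P S n x :=
  ⟨fun j _ => hx.1 j, fun _ _ hij _ => monotone_nat_of_le_succ hx.2.1 hij, fun j _ => hx.2.2 j⟩

/-- Reading a nonincreasing sequence backwards: the `j`-th letter is taken at an index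
`≡ j [MOD m]` that decreases with `j`. -/
theorem exists_isPatternChain_of_ge (hx : IsPatternSeq hm P (· ≥ ·) S x) (n : ℕ) :
    ∃ c, IsPatternChain hm P S n c := by
  refine ⟨fun j => x (m * (n - j) + j % m), fun j _ => hx.1 _,
    fun i j hij hj => antitone_nat_of_succ_le hx.2.1 ?_,
    fun j _ => by simpa [Nat.mul_add_mod] using hx.2.2 (m * (n - j) + j % m)⟩
  rcases hij.eq_or_lt with rfl | hlt
  · rfl
  · have hsplit : m * (n - i) = m * (n - j) + m * (j - i) := by
      rw [← Nat.mul_add]; congr 1; omega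
    have hgap : m ≤ m * (j - i) := Nat.le_mul_of_pos_right m (by omega)
    have := Nat.mod_lt j hm
    omega

end IsPatternSeq

variable {hm P} in
theorem GeneratesAllPowers.mono {S T : Set α} (hS : GeneratesAllPowers hm P S) (hST : S ⊆ T) :
    GeneratesAllPowers hm P T :=
  fun k => (hS k).imp fun _ hc => hc.mono hST

end Preorder

namespace GeneratesAllPowers

variable {α : Type*} [LinearOrder α] {m : ℕ} {hm : 0 < m} {P : Fin m → Set α} {S : Set α}

theorem inter_Ici_or_inter_Iio (hS : GeneratesAllPowers hm P S) (p : α) :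
    GeneratesAllPowers hm P (S ∩ Ici p) ∨ GeneratesAllPowers hm P (S ∩ Iio p) := by
  refine or_iff_not_imp_left.2 fun hIci k => ?_
  obtain ⟨k₀, hk₀⟩ : ∃ k₀, ∀ c, ¬IsPatternChain hm P (S ∩ Ici p) (k₀ * m) c := by
    simpa [GeneratesAllPowers] using hIci
  obtain ⟨c, hc⟩ := hS (k + k₀)
  rw [add_mul] at hc
  obtain ⟨j, hj, hjp⟩ : ∃ j < k₀ * m, c (k * m + j) < p := by
    by_contra! h
    exact hk₀ _ (hc.shift.inter h)
  exact ⟨c, (hc.of_le (by omega)).inter fun i hi =>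
    (hc.2.1 i _ (by omega) (by omega)).trans_lt hjp⟩

theorem exists_isPatternSeq_le_or_exists_isPatternBlock_ge (hS : GeneratesAllPowers hm P S) :
    (∃ x, IsPatternSeq hm P (· ≤ ·) S x) ∨
      ∃ B, IsPatternBlock P (· ≥ ·) S B ∧ GeneratesAllPowers hm P (S ∩ Iic (B (m - 1))) := by
  by_cases hdown : ∃ c, IsPatternChain hm P S (m * m) c ∧
      GeneratesAllPowers hm P (S ∩ Iio (c (m - 1)))
  · obtain ⟨c, hc, hbelow⟩ := hdown
    obtain ⟨B, hB, hlast⟩ := hc.exists_isPatternBlock_ge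
    exact .inr ⟨B, hB, hlast ▸ hbelow.mono (inter_subset_inter_right _ Iio_subset_Iic_self)⟩
  refine .inl (exists_isPatternSeq_of_forall_exists_block hm P _
    (fun C => C ⊆ S ∧ GeneratesAllPowers hm P C) ?_ ⟨subset_rfl, hS⟩)
  rintro C ⟨hCS, hC⟩
  obtain ⟨c, hc⟩ := hC m
  refine ⟨c, hc.isPatternBlock (Nat.le_mul_self m), inter_subset_left.trans hCS,
    (hC.inter_Ici_or_inter_Iio (c (m - 1))).resolve_right fun hbelow => hdown ?_⟩
  exact ⟨c, hc.mono hCS, hbelow.mono (inter_subset_inter_left _ hCS)⟩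

theorem exists_isPatternSeq (hS : GeneratesAllPowers hm P S) :
    (∃ x, IsPatternSeq hm P (· ≤ ·) S x) ∨ ∃ x, IsPatternSeq hm P (· ≥ ·) S x := by
  refine or_iff_not_imp_left.2 fun hup =>
    exists_isPatternSeq_of_forall_exists_block hm P _
      (fun C => C ⊆ S ∧ GeneratesAllPowers hm P C) ?_ ⟨subset_rfl, hS⟩
  rintro C ⟨hCS, hC⟩
  rcases hC.exists_isPatternSeq_le_or_exists_isPatternBlock_ge with ⟨x, hx⟩ | ⟨B, hB, hbelow⟩
  · exact absurd ⟨x, hx.mono hCS⟩ hup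
  · exact ⟨B, hB, inter_subset_left.trans hCS, hbelow⟩

end GeneratesAllPowers

theorem stmt_17_general {Z : Type} [LinearOrder Z] (X : Set Z) (m : ℕ) (hm : 0 < m)
    (P : Fin m → Set Z) :
    (∀ k : ℕ, ∃ x : ℕ → Z,
        (∀ j < k * m, x j ∈ X) ∧
        (∀ i j : ℕ, i ≤ j → j < k * m → x i ≤ x j) ∧
        (∀ j < k * m, x j ∈ P ⟨j % m, Nat.mod_lt j hm⟩)) ↔
      (∃ x : ℕ → Z,
        (∀ j, x j ∈ X) ∧
        ((∀ j, x j ≤ x (j + 1)) ∨ (∀ j, x (j + 1) ≤ x j)) ∧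
        (∀ j, x j ∈ P ⟨j % m, Nat.mod_lt j hm⟩)) := by
  constructor
  · intro hX
    rcases GeneratesAllPowers.exists_isPatternSeq (hm := hm) (P := P) hX with
      ⟨x, hxX, hup, hxP⟩ | ⟨x, hxX, hdown, hxP⟩
    · exact ⟨x, hxX, .inl hup, hxP⟩
    · exact ⟨x, hxX, .inr hdown, hxP⟩
  · rintro ⟨x, hxX, hup | hdown, hxP⟩ k
    · exact ⟨x, IsPatternSeq.isPatternChain (hm := hm) ⟨hxX, hup, hxP⟩ _⟩
    · exact IsPatternSeq.exists_isPatternChain_of_ge (hm := hm) ⟨hxX, hdown, hxP⟩ _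

/-- for pairwise disjoint sets `P_1, …, P_m` in a linear order and
`X ⊆ Z`, the finite string `(P_1 ⋯ P_m)^k` is generated by `X` for every `k`
iff the infinite string `(P_1 ⋯ P_m)^ω` is generated by `X` (by a monotone
sequence). -/
theorem stmt_17 {Z : Type} [LinearOrder Z] (X : Set Z) (m : ℕ) (hm : 0 < m)
    (P : Fin m → Set Z) (hdisj : ∀ i j : Fin m, i ≠ j → Disjoint (P i) (P j)) :
    (∀ k : ℕ, ∃ x : ℕ → Z,
        (∀ j < k * m, x j ∈ X) ∧
        (∀ i j : ℕ, i ≤ j → j < k * m → x i ≤ x j) ∧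
        (∀ j < k * m, x j ∈ P ⟨j % m, Nat.mod_lt j hm⟩)) ↔
      (∃ x : ℕ → Z,
        (∀ j, x j ∈ X) ∧
        ((∀ j, x j ≤ x (j + 1)) ∨ (∀ j, x (j + 1) ≤ x j)) ∧
        (∀ j, x j ∈ P ⟨j % m, Nat.mod_lt j hm⟩)) :=
  stmt_17_general X m hm P
end

section
/- (1) Let (V, ≤) be a finite partial order containing an antichain of cardinality p. Then V has at least 2^p distinct convex subsets. (2) For all natural numbers n and p with 1 ≤ p ≤ n and p dividing n, there exists a partial order on a set of n elements whose largest antichain has cardinality exactly p (width p) and which has at least (n/p)^p distinct convex subsets. -/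
lemma card_le_ncard_of_inj {α β : Type*} [Finite β] (f : α → β) (S : Set β)
    (hf : Function.Injective f) (hfS : ∀ a, f a ∈ S) : Nat.card α ≤ S.ncard := by
  calc Nat.card α = (Set.univ : Set α).ncard := (Set.ncard_univ α).symm
    _ = (f '' Set.univ).ncard := (Set.ncard_image_of_injective _ hf).symm
    _ ≤ S.ncard := Set.ncard_le_ncard (by rintro _ ⟨a, -, rfl⟩; exact hfS a) (Set.toFinite S)

/-- A set is convex with respect to a relation `le` (strictly between two
elements of the set implies membership). -/
def ConvexInRel {V : Type} (le : V → V → Prop) (C : Set V) : Prop :=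
  ∀ u v z : V, u ∈ C → z ∈ C → le u v → u ≠ v → le v z → v ≠ z → v ∈ C

/-- A set is an antichain with respect to `le`. -/
def AntichainRel {V : Type} (le : V → V → Prop) (Ac : Set V) : Prop :=
  ∀ u ∈ Ac, ∀ v ∈ Ac, u ≠ v → ¬ le u v

/-- (1) a finite partial order containing an antichain of
cardinality `p` has at least `2^p` convex subsets; (2) for `1 ≤ p ≤ n` with
`p ∣ n` there is a partial order on `n` elements of width exactly `p` with at
least `(n / p)^p` convex subsets. -/
theorem stmt_18 :
    (∀ (V : Type) (_ : Fintype V) (le : V → V → Prop), IsPartialOrder V le →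
      ∀ (p : ℕ) (Ac : Set V), AntichainRel le Ac → Ac.ncard = p →
        2 ^ p ≤ {C : Set V | ConvexInRel le C}.ncard) ∧
    (∀ n p : ℕ, 1 ≤ p → p ≤ n → p ∣ n →
      ∃ (V : Type) (_ : Fintype V) (le : V → V → Prop),
        IsPartialOrder V le ∧
        Fintype.card V = n ∧
        (∃ Ac : Set V, AntichainRel le Ac ∧ Ac.ncard = p) ∧
        (∀ Ac : Set V, AntichainRel le Ac → Ac.ncard ≤ p) ∧
        (n / p) ^ p ≤ {C : Set V | ConvexInRel le C}.ncard) := by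
  constructor
  · intro V _ le hpo p Ac hAc hcard
    classical
    -- injection from powerset of Ac.toFinset
    have hAcfin : Ac.Finite := Ac.toFinite
    have key := card_le_ncard_of_inj
      (f := fun F : {F : Finset V // F ⊆ hAcfin.toFinset} => ((F : Finset V) : Set V))
      (S := {C : Set V | ConvexInRel le C})
      (by
        intro F G h
        exact Subtype.ext (Finset.coe_injective h))
      (by
        intro F
        intro u v z hu hz huv hne hvz hne'
        exfalso
        have hu' : u ∈ Ac := by
          have := F.2 hu; simpa using this
        have hz' : z ∈ Ac := by
          have := F.2 hz; simpa using this
        have huz : le u z := hpo.trans u v z huv hvz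
        by_cases h : u = z
        · subst h
          exact hne (hpo.antisymm u v huv hvz)
        · exact hAc u hu' z hz' h huz)
    have hc : Nat.card {F : Finset V // F ⊆ hAcfin.toFinset} = 2 ^ p := by
      rw [Nat.card_eq_fintype_card]
      have : Fintype.card {F : Finset V // F ⊆ hAcfin.toFinset}
          = hAcfin.toFinset.powerset.card := by
        rw [← Fintype.card_coe]
        exact Fintype.card_congr (Equiv.subtypeEquivRight (by simp))
      rw [this, Finset.card_powerset, ← Set.ncard_eq_toFinset_card Ac hAcfin, hcard]
    rwa [hc] at key
  · intro n p hp1 hpn hdvd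
    classical
    set m := n / p with hm
    have hm1 : 1 ≤ m := Nat.one_le_div_iff (by omega) |>.mpr hpn
    refine ⟨Fin p × Fin m, inferInstance,
      fun a b => a.1 = b.1 ∧ a.2 ≤ b.2, ?_, ?_, ?_, ?_, ?_⟩
    · exact { refl := fun a => ⟨rfl, le_refl _⟩,
              trans := fun a b c h1 h2 => ⟨h1.1.trans h2.1, h1.2.trans h2.2⟩,
              antisymm := fun a b h1 h2 => Prod.ext h1.1 (le_antisymm h1.2 h2.2) }
    · simp [hm, Nat.mul_div_cancel' hdvd]
    · refine ⟨Set.range (fun i : Fin p => (i, (⟨0, hm1⟩ : Fin m))), ?_, ?_⟩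
      · rintro _ ⟨i, rfl⟩ _ ⟨j, rfl⟩ hne hle
        have hij : i = j := hle.1
        exact hne (by rw [hij])
      · rw [← Set.image_univ, Set.ncard_image_of_injective _ (by
          intro i j h; simpa using (Prod.ext_iff.mp h).1), Set.ncard_univ]
        simp
    · intro Ac hAc
      have hinj : Set.InjOn Prod.fst Ac := by
        intro u hu v hv h
        by_contra hne
        rcases le_total u.2 v.2 with h2 | h2
        · exact hAc u hu v hv hne ⟨h, h2⟩
        · exact hAc v hv u hu (Ne.symm hne) ⟨h.symm, h2⟩
      calc Ac.ncard = (Prod.fst '' Ac).ncard := (Set.ncard_image_of_injOn hinj).symm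
        _ ≤ (Set.univ : Set (Fin p)).ncard :=
            Set.ncard_le_ncard (Set.subset_univ _) (Set.toFinite _)
        _ = p := by rw [Set.ncard_univ]; simp
    · have key := card_le_ncard_of_inj
        (f := fun f : Fin p → Fin m => Set.range (fun i => ((i, f i) : Fin p × Fin m)))
        (S := {C : Set (Fin p × Fin m) | ConvexInRel (fun a b => a.1 = b.1 ∧ a.2 ≤ b.2) C})
        (by
          intro f g h
          funext i
          have h' : Set.range (fun i => ((i, f i) : Fin p × Fin m))
              = Set.range (fun i => ((i, g i) : Fin p × Fin m)) := h
          have hmem : ((i, f i) : Fin p × Fin m) ∈ Set.range (fun j => ((j, g j) : Fin p × Fin m)) :=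
            h' ▸ ⟨i, rfl⟩
          obtain ⟨j, hj⟩ := hmem
          have hji : j = i := (Prod.ext_iff.mp hj).1
          subst hji
          exact ((Prod.ext_iff.mp hj).2).symm)
        (by
          rintro f u v z ⟨i, rfl⟩ ⟨j, rfl⟩ huv hne hvz hne'
          exfalso
          have hji : j = i := hvz.1.symm.trans huv.1.symm
          subst hji
          have h2 : v.2 = f j := le_antisymm hvz.2 huv.2
          exact hne (Prod.ext huv.1 h2.symm))
      rwa [Nat.card_eq_fintype_card, Fintype.card_fun, Fintype.card_fin, Fintype.card_fin] at key
end
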